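/- Let $r_0 < r_1$, $\tau > 0$, $\mathcal{J} > 0$, $0 < j < \mathcal{J}$, $\underline{B},\overline{B}$ be constants with $\overline{B} + \frac{1}{\tau} > \mathcal{J}$ and $\underline{B} + \frac{\mathcal{J}}{\tau(\overline{B} + 1/\tau)} > \mathcal{J}$. Define $\mathfrak{m}(r) = \mathcal{J} + \lambda \sin\left(\pi \frac{r - r_0}{r_1 - r_0}\right)$. Then there exists $\lambda_0 > 0$, independent of $j$, such that for all $0 < \lambda < \lambda_0$ and every measurable $B$ with $\underline{B} \leq B(r) \leq \overline{B}$, $\mathfrak{m}$ is a (classical) subsolution: $-\left[r\left(\frac{1}{\mathfrak{m}} - \frac{j^2}{\mathfrak{m}^3}\right)\mathfrak{m}' + \frac{r\mathcal{J}}{\tau \mathfrak{m}}\right]' + \mathfrak{m} - B(r) < 0$ a.e. on $(r_0, r_1)$, with $\mathfrak{m}(r_0) = \mathfrak{m}(r_1) = \mathcal{J}$. -/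

import Mathlib

/-!
On `(r0, r1)` the barrier satisfies `J ≤ m ≤ J + λ`, and every term of the derivative of the flux
other than `J / (τ m)` carries a factor `m'` or `m''`, so it is `O(λ)` uniformly in `j < J`.
What remains, `-J / (τ m) + m - B`, is at most `J + λ - Bl - J / (τ (Bu + 1/τ))` as soon as
`m ≤ Bu + 1/τ`, and this is negative for small `λ` by the hypothesis on `Bl`.
-/

open Real

noncomputable def sinBarrier (J lam r0 r1 : ℝ) (r : ℝ) : ℝ :=
  J + lam * sin (π * (r - r0) / (r1 - r0))

noncomputable def subsonicFlux (j J τ : ℝ) (m : ℝ → ℝ) (s : ℝ) : ℝ :=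
  s * (1 / m s - j ^ 2 / m s ^ 3) * deriv m s + s * J / (τ * m s)

/-- The derivative of `subsonicFlux` at `s` is this plus `J / (τ * μ)`, where `μ, g, h` stand for
`m s, m' s, m'' s`. -/
noncomputable def subsonicFluxDerivError (j J τ s μ g h : ℝ) : ℝ :=
  (1 / μ - j ^ 2 / μ ^ 3) * g + s * (3 * j ^ 2 / μ ^ 4 - 1 / μ ^ 2) * g ^ 2
    + s * (1 / μ - j ^ 2 / μ ^ 3) * h - s * (J / (τ * μ ^ 2)) * g

theorem hasDerivAt_subsonicFlux {j J τ s h : ℝ} {m : ℝ → ℝ}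
    (hm : HasDerivAt m (deriv m s) s) (hm' : HasDerivAt (deriv m) h s)
    (hms : m s ≠ 0) (hτ : τ ≠ 0) :
    HasDerivAt (subsonicFlux j J τ m)
      (subsonicFluxDerivError j J τ s (m s) (deriv m s) h + J / (τ * m s)) s := by
  have hcoef := (hasDerivAt_const s (1 : ℝ)).div hm hms |>.sub
    ((hasDerivAt_const s (j ^ 2)).div (hm.pow 3) (pow_ne_zero 3 hms))
  have hdrift := ((hasDerivAt_id s).mul_const J).div (hm.const_mul τ) (mul_ne_zero hτ hms)
  refine ((((hasDerivAt_id s).mul hcoef).mul hm').add hdrift).congr_deriv ?_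
  simp only [subsonicFluxDerivError, id, Pi.mul_apply, Pi.div_apply, Pi.sub_apply, Pi.pow_apply]
  field_simp
  ring

theorem abs_subsonicFluxDerivError_le {j J τ s μ g h R a b : ℝ} (hJ : 0 < J) (hτ : 0 < τ)
    (hj : j ^ 2 ≤ J ^ 2) (hμ : J ≤ μ) (hs : |s| ≤ R) (hg : |g| ≤ a) (hh : |h| ≤ b) :
    |subsonicFluxDerivError j J τ s μ g h|
      ≤ 1 / J * a + R * (3 / J ^ 2) * a ^ 2 + R * (1 / J) * b + R * (1 / (τ * J)) * a := by
  have hμ0 : 0 < μ := hJ.trans_le hμ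
  have hcube : J ^ 3 ≤ μ ^ 3 := by gcongr
  have hquart : J ^ 4 ≤ μ ^ 4 := by gcongr
  have hA : |1 / μ - j ^ 2 / μ ^ 3| ≤ 1 / J := by
    refine abs_sub_le_of_nonneg_of_le (by positivity) (one_div_le_one_div_of_le hJ hμ)
      (by positivity) ?_
    rw [div_le_div_iff₀ (by positivity) hJ]
    nlinarith
  have hB : |3 * j ^ 2 / μ ^ 4 - 1 / μ ^ 2| ≤ 3 / J ^ 2 := by
    refine abs_sub_le_of_nonneg_of_le (by positivity) ?_ (by positivity) ?_
    · rw [div_le_div_iff₀ (by positivity) (by positivity)]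
      nlinarith
    · rw [div_le_div_iff₀ (by positivity) (by positivity)]
      nlinarith [pow_le_pow_left₀ hJ.le hμ 2]
  have hC : |J / (τ * μ ^ 2)| ≤ 1 / (τ * J) := by
    rw [abs_of_pos (by positivity), div_le_div_iff₀ (by positivity) (by positivity)]
    nlinarith [pow_le_pow_left₀ hJ.le hμ 2]
  have hR : 0 ≤ R := (abs_nonneg s).trans hs
  have ha : 0 ≤ a := (abs_nonneg g).trans hg
  unfold subsonicFluxDerivError
  calc _ ≤ |1 / μ - j ^ 2 / μ ^ 3| * |g| + |s| * |3 * j ^ 2 / μ ^ 4 - 1 / μ ^ 2| * |g| ^ 2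
          + |s| * |1 / μ - j ^ 2 / μ ^ 3| * |h| + |s| * |J / (τ * μ ^ 2)| * |g| := by
        simp only [← abs_mul, ← abs_pow]
        exact (abs_sub _ _).trans (add_le_add_left (abs_add_three _ _ _) _)
    _ ≤ _ := by gcongr

theorem hasDerivAt_pi_mul_sub_div (r0 r1 r : ℝ) :
    HasDerivAt (fun r => π * (r - r0) / (r1 - r0)) (π / (r1 - r0)) r := by
  simpa using (((hasDerivAt_id r).sub_const r0).const_mul π).div_const (r1 - r0)

theorem sinBarrier_left (J lam r0 r1 : ℝ) : sinBarrier J lam r0 r1 r0 = J := by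
  simp [sinBarrier]

theorem sinBarrier_right (J lam : ℝ) {r0 r1 : ℝ} (h : r0 ≠ r1) :
    sinBarrier J lam r0 r1 r1 = J := by
  simp [sinBarrier, mul_div_assoc, div_self (sub_ne_zero.mpr h.symm)]

theorem hasDerivAt_sinBarrier (J lam r0 r1 r : ℝ) :
    HasDerivAt (sinBarrier J lam r0 r1)
      (lam * (π / (r1 - r0)) * cos (π * (r - r0) / (r1 - r0))) r := by
  have harg := hasDerivAt_pi_mul_sub_div r0 r1 r
  exact ((harg.sin.const_mul lam).const_add J).congr_deriv (by ring)

theorem deriv_sinBarrier (J lam r0 r1 : ℝ) :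
    deriv (sinBarrier J lam r0 r1)
      = fun r => lam * (π / (r1 - r0)) * cos (π * (r - r0) / (r1 - r0)) :=
  funext fun r => (hasDerivAt_sinBarrier J lam r0 r1 r).deriv

theorem hasDerivAt_deriv_sinBarrier (J lam r0 r1 r : ℝ) :
    HasDerivAt (deriv (sinBarrier J lam r0 r1))
      (-(lam * (π / (r1 - r0)) ^ 2 * sin (π * (r - r0) / (r1 - r0)))) r := by
  have harg := hasDerivAt_pi_mul_sub_div r0 r1 r
  rw [deriv_sinBarrier]
  exact (harg.cos.const_mul (lam * (π / (r1 - r0)))).congr_deriv (by ring)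

theorem le_sinBarrier (J : ℝ) {lam r0 r1 r : ℝ} (hlam : 0 ≤ lam) (hr : r ∈ Set.Icc r0 r1) :
    J ≤ sinBarrier J lam r0 r1 r := by
  have harg : 0 ≤ π * (r - r0) / (r1 - r0) :=
    div_nonneg (mul_nonneg pi_pos.le (sub_nonneg.mpr hr.1)) (sub_nonneg.mpr (hr.1.trans hr.2))
  have harg' : π * (r - r0) / (r1 - r0) ≤ π := by
    rw [mul_div_assoc]
    exact mul_le_of_le_one_right pi_pos.le
      (div_le_one_of_le₀ (by linarith [hr.2]) (sub_nonneg.mpr (hr.1.trans hr.2)))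
  have hsin := sin_nonneg_of_nonneg_of_le_pi harg harg'
  unfold sinBarrier
  nlinarith

theorem sinBarrier_le (J : ℝ) {lam : ℝ} (hlam : 0 ≤ lam) (r0 r1 r : ℝ) :
    sinBarrier J lam r0 r1 r ≤ J + lam := by
  unfold sinBarrier
  nlinarith [sin_le_one (π * (r - r0) / (r1 - r0))]

theorem abs_deriv_sinBarrier_le (J : ℝ) {lam r0 r1 : ℝ} (hlam : 0 ≤ lam) (hr : r0 ≤ r1) (r : ℝ) :
    |deriv (sinBarrier J lam r0 r1) r| ≤ lam * (π / (r1 - r0)) := by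
  have hk : 0 ≤ π / (r1 - r0) := div_nonneg pi_pos.le (sub_nonneg.mpr hr)
  rw [deriv_sinBarrier, abs_mul, abs_of_nonneg (mul_nonneg hlam hk)]
  exact mul_le_of_le_one_right (mul_nonneg hlam hk) (abs_cos_le_one _)

theorem abs_deriv_deriv_sinBarrier_le (J : ℝ) {lam r0 r1 : ℝ} (hlam : 0 ≤ lam) (r : ℝ) :
    |deriv (deriv (sinBarrier J lam r0 r1)) r| ≤ lam * (π / (r1 - r0)) ^ 2 := by
  rw [(hasDerivAt_deriv_sinBarrier J lam r0 r1 r).deriv, abs_neg, abs_mul,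
    abs_of_nonneg (by positivity)]
  exact mul_le_of_le_one_right (by positivity) (abs_sin_le_one _)

theorem abs_subsonicFluxDerivError_sinBarrier_le {j J τ lam r0 r1 r R : ℝ} (hJ : 0 < J)
    (hτ : 0 < τ) (hj : j ^ 2 ≤ J ^ 2) (hlam : 0 ≤ lam) (hlam1 : lam ≤ 1)
    (hr : r ∈ Set.Icc r0 r1) (hrR : |r| ≤ R) :
    |subsonicFluxDerivError j J τ r (sinBarrier J lam r0 r1 r) (deriv (sinBarrier J lam r0 r1) r)
        (deriv (deriv (sinBarrier J lam r0 r1)) r)|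
      ≤ lam * (π / (r1 - r0) / J + 3 * R * (π / (r1 - r0)) ^ 2 / J ^ 2
          + R * (π / (r1 - r0)) ^ 2 / J + R * (π / (r1 - r0)) / (τ * J)) := by
  set k := π / (r1 - r0)
  refine (abs_subsonicFluxDerivError_le hJ hτ hj (le_sinBarrier J hlam hr) hrR
    (abs_deriv_sinBarrier_le J hlam (hr.1.trans hr.2) r)
    (abs_deriv_deriv_sinBarrier_le J hlam r)).trans ?_
  have hR : 0 ≤ R := (abs_nonneg r).trans hrR
  calc _ = lam * (k / J + 3 * R * k ^ 2 / J ^ 2 + R * k ^ 2 / J + R * k / (τ * J))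
        - 3 * R * k ^ 2 / J ^ 2 * (lam - lam ^ 2) := by ring
    _ ≤ _ := sub_le_self _ (mul_nonneg (by positivity) (by nlinarith))

theorem stmt_13 (r0 r1 τ J Bl Bu : ℝ) (hr : r0 < r1) (hτ : 0 < τ) (hJ : 0 < J)
    (h1 : Bu + 1/τ > J)
    (h2 : Bl + J/(τ*(Bu + 1/τ)) > J) :
    ∃ lam0 > 0, ∀ j : ℝ, 0 < j → j < J → ∀ lam : ℝ, 0 < lam → lam < lam0 →
      ∀ B : ℝ → ℝ, Measurable B → (∀ r ∈ Set.Icc r0 r1, Bl ≤ B r ∧ B r ≤ Bu) →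
      let frakm : ℝ → ℝ := fun r => J + lam * Real.sin (Real.pi * (r - r0)/(r1 - r0))
      frakm r0 = J ∧ frakm r1 = J ∧
      ∀ r ∈ Set.Ioo r0 r1,
        -(deriv (fun s => s * (1/(frakm s) - j^2/(frakm s)^3) * deriv frakm s
            + s * J / (τ * frakm s)) r) + frakm r - B r < 0 := by
  set k := π / (r1 - r0)
  set R := max |r0| |r1|
  set C := k / J + 3 * R * k ^ 2 / J ^ 2 + R * k ^ 2 / J + R * k / (τ * J)
  set ε := Bl + J / (τ * (Bu + 1 / τ)) - J
  have hC : 0 ≤ C := by positivity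
  have hε : 0 < ε := by linarith
  refine ⟨min 1 (min (Bu + 1 / τ - J) (ε / (C + 1))),
    lt_min one_pos (lt_min (by linarith) (by positivity)), ?_⟩
  intro j hj hjJ lam hlam hlam0 B _ hB
  have hlam1 : lam ≤ 1 := hlam0.le.trans (min_le_left _ _)
  have hlamBu : lam < Bu + 1 / τ - J := hlam0.trans_le ((min_le_right _ _).trans (min_le_left _ _))
  have hlamε : lam * (C + 1) < ε :=
    (lt_div_iff₀ (by linarith)).mp (hlam0.trans_le ((min_le_right _ _).trans (min_le_right _ _)))
  refine ⟨sinBarrier_left J lam r0 r1, sinBarrier_right J lam hr.ne, fun r hrI => ?_⟩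
  set m := sinBarrier J lam r0 r1
  change -(deriv (subsonicFlux j J τ m) r) + m r - B r < 0
  have hrI' : r ∈ Set.Icc r0 r1 := Set.Ioo_subset_Icc_self hrI
  have hJm : J ≤ m r := le_sinBarrier J hlam.le hrI'
  have hmJ : m r ≤ J + lam := sinBarrier_le J hlam.le r0 r1 r
  rw [(hasDerivAt_subsonicFlux (hasDerivAt_sinBarrier J lam r0 r1 r).differentiableAt.hasDerivAt
    (hasDerivAt_deriv_sinBarrier J lam r0 r1 r).differentiableAt.hasDerivAt
    (hJ.trans_le hJm).ne' hτ.ne').deriv]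
  have hE : |subsonicFluxDerivError j J τ r (m r) (deriv m r) (deriv (deriv m) r)| ≤ lam * C :=
    abs_subsonicFluxDerivError_sinBarrier_le hJ hτ (pow_le_pow_left₀ hj.le hjJ.le 2) hlam.le
      hlam1 hrI' (abs_le_max_abs_abs hrI'.1 hrI'.2)
  have hdrift : J / (τ * (Bu + 1 / τ)) ≤ J / (τ * m r) := by
    have hm0 : 0 < m r := hJ.trans_le hJm
    gcongr
    linarith
  linarith [neg_abs_le (subsonicFluxDerivError j J τ r (m r) (deriv m r) (deriv (deriv m) r)),
    (hB r hrI').1]
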